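/- Let L be a rank r geometric lattice with complete flag and coatom partition A_0, …, A_{r−1} as above, and let S_G be the simplicial complex associated to G ∈ L. Then the geometric realization of S_G is homotopy equivalent to the sphere S^{corank(G)−1}, where corank(G) = r − rank(G). In particular S_{0̂} ≃ S^{r−1}. -/

import Mathlib

/-- A geometric lattice: a finite ranked lattice in which every element is a
join of atoms and the rank function is semimodular. -/
structure IsGeometricLattice (L : Type*) [Lattice L] [BoundedOrder L] [Finite L]
    (rk : L → ℕ) : Prop where
  rank_bot : rk ⊥ = 0
  rank_strictMono : StrictMono rk
  rank_covBy : ∀ x y : L, x ⋖ y → rk y = rk x + 1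
  atomistic : ∀ x : L, ∃ s : Finset L, (∀ a ∈ s, IsAtom a) ∧ x = s.sup id
  semimodular : ∀ x y : L, rk (x ⊓ y) + rk (x ⊔ y) ≤ rk x + rk y

/-- The set of coatoms of `L` lying above `X`. -/
def coatomsAbove {L : Type*} [Lattice L] [BoundedOrder L] (X : L) : Set L :=
  {C | IsCoatom C ∧ X ≤ C}

/-- A complete flag `⊥ = F 0 ⋖ F 1 ⋖ ⋯ ⋖ F r = ⊤` (a maximal chain) in a
rank `r` lattice, recorded as a sequence of covers. -/
def IsCompleteFlag {L : Type*} [Lattice L] [BoundedOrder L] {r : ℕ}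
    (F : Fin (r + 1) → L) : Prop :=
  F 0 = ⊥ ∧ F (Fin.last r) = ⊤ ∧ ∀ i : Fin r, F i.castSucc ⋖ F i.succ

/-- The maximal face of `S_G` with sign pattern `ε`: for each `i`, it contains
the vertices `(H, ε i)` for the coatoms `H ≥ G` lying in the part `A i`. -/
def flagMaxFace {L : Type*} [Lattice L] [BoundedOrder L] {r : ℕ}
    (A : Fin r → Set L) (G : L) (ε : Fin r → Bool) : Set (L × Bool) :=
  {p | ∃ i : Fin r, p.1 ∈ coatomsAbove G ∩ A i ∧ p.2 = ε i}

/-- The simplicial complex `S_G`: its faces are the subsets of the maximal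
faces `flagMaxFace A G ε`, `ε ∈ {+,-}^r`. -/
def flagComplex {L : Type*} [Lattice L] [BoundedOrder L] {r : ℕ}
    (A : Fin r → Set L) (G : L) : Set (Set (L × Bool)) :=
  {σ | ∃ ε : Fin r → Bool, σ ⊆ flagMaxFace A G ε}

/-- The geometric realization of an abstract simplicial complex `K` on a finite
vertex set `W`, inside `ℝ^W`. -/
def realization {W : Type*} [Fintype W] (K : Set (Set W)) : Set (W → ℝ) :=
  {x | (∀ w, 0 ≤ x w) ∧ (∑ w, x w) = 1 ∧ ∃ σ ∈ K, {w | x w ≠ 0} ⊆ σ}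

/-- The unit sphere `S^{n-1} ⊆ ℝ^n` (empty for `n = 0`). -/
def stdSphere (n : ℕ) : Set (EuclideanSpace ℝ (Fin n)) :=
  Metric.sphere (0 : EuclideanSpace ℝ (Fin n)) 1

/-!
Write `C i = coatomsAbove G ∩ A i`; these blocks are pairwise disjoint, and `S_G` is the complex
whose maximal faces choose one sign per block. The signed block masses
`x ↦ (∑_{v ∈ C i} (x (v, +) - x (v, -)))_i` map its realization onto the `ℓ¹` unit sphere of
`ℝ^J`, `J = {i | C i ≠ ∅}`. Putting the weights `(t i)⁺`, `(t i)⁻` on one chosen vertex of each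
block is a section, and a point `x` and the section at its image lie in a common simplex, so the
straight-line homotopy makes this a homotopy equivalence; radial projection then identifies the
`ℓ¹` sphere with `S^{|J| - 1}`.

For the dimension, `C i` is nonempty iff `rk (G ⊔ F i)` jumps at step `i`, because in a geometric
lattice every cover `y ⋖ z` is separated by a coatom above `y`. The jumps are of size at most one
and telescope from `rk G` to `rk ⊤ = r`, so `|J| = r - rk G`.
-/

open Finset Function
open scoped ContinuousMap

theorem covBy_of_lt_of_rank_eq_succ {P : Type*} [Preorder P] {rk : P → ℕ} (hrk : StrictMono rk)
    {x z : P} (hxz : x < z) (h : rk z = rk x + 1) : x ⋖ z :=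
  ⟨hxz, fun c hxc hcz => by have := hrk hxc; have := hrk hcz; omega⟩

theorem Fin.card_filter_castSucc_lt_succ_add {n : ℕ} (g : Fin (n + 1) → ℕ)
    (hmono : ∀ i : Fin n, g i.castSucc ≤ g i.succ)
    (hstep : ∀ i : Fin n, g i.succ ≤ g i.castSucc + 1) :
    #{i : Fin n | g i.castSucc < g i.succ} + g 0 = g (Fin.last n) := by
  induction n with
  | zero => simp
  | succ n ih =>
    have ih' := ih (fun i => g i.succ) (fun i => hmono i.succ) (fun i => hstep i.succ)
    have h0 := hmono 0
    have h1 := hstep 0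
    rw [Fin.card_filter_univ_succ]
    simp only [Fin.succ_castSucc, Fin.succ_last, Nat.succ_eq_add_one, Fin.castSucc_zero,
      Fin.succ_zero_eq_one]
      at h0 h1 ih' ⊢
    by_cases h : g 0 < g 1 <;> simp only [h, ↓reduceIte] <;> omega

/-- The part `A_i` of the coatom partition attached to the flag. -/
def coatomPart {L : Type*} [Lattice L] [BoundedOrder L] {r : ℕ} (F : Fin (r + 1) → L)
    (i : Fin r) : Set L :=
  coatomsAbove (F i.castSucc) \ coatomsAbove (F i.succ)

namespace IsGeometricLattice

variable {L : Type*} [Lattice L] [BoundedOrder L] [Finite L] {rk : L → ℕ}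

theorem rank_sup_le_of_covBy (hL : IsGeometricLattice L rk) {y z : L} (hyz : y ⋖ z) (x : L) :
    rk (x ⊔ z) ≤ rk (x ⊔ y) + 1 := by
  have hsemi := hL.semimodular (x ⊔ y) z
  have hy : rk y ≤ rk ((x ⊔ y) ⊓ z) :=
    hL.rank_strictMono.monotone (le_inf le_sup_right hyz.le)
  rw [sup_assoc, sup_eq_right.mpr hyz.le, hL.rank_covBy y z hyz] at hsemi
  omega

theorem exists_coatom_le_not_le (hL : IsGeometricLattice L rk) {x z : L} (hxz : x ⋖ z) :
    ∃ H : L, IsCoatom H ∧ x ≤ H ∧ ¬ z ≤ H := by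
  obtain ⟨m, ⟨hxm, hzm⟩, hmax⟩ :=
    Set.Finite.exists_maximal (Set.toFinite {m | x ≤ m ∧ ¬ z ≤ m}) ⟨x, le_rfl, hxz.lt.not_ge⟩
  have hmz : m < m ⊔ z := left_lt_sup.mpr hzm
  -- For an atom `a ≰ m`, maximality gives `z ≤ m ⊔ a`, and `m ⋖ m ⊔ a` then forces
  -- `m ⊔ z = m ⊔ a`.
  have hatoms : ∀ a, IsAtom a → a ≤ m ⊔ z := by
    intro a ha
    by_cases ham : a ≤ m
    · exact ham.trans le_sup_left
    have hzma : z ≤ m ⊔ a := by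
      by_contra hz
      exact ham (le_sup_right.trans (hmax ⟨hxm.trans le_sup_left, hz⟩ le_sup_left))
    have hrk : rk (m ⊔ a) ≤ rk m + 1 := by
      simpa using hL.rank_sup_le_of_covBy ha.bot_covBy m
    have hle : m ⊔ z ≤ m ⊔ a := sup_le le_sup_left hzma
    have heq : m ⊔ z = m ⊔ a := hle.eq_of_not_lt fun hlt => by
      have := hL.rank_strictMono hlt
      have := hL.rank_strictMono hmz
      omega
    exact heq ▸ le_sup_right
  have htop : m ⊔ z = ⊤ := by
    obtain ⟨s, hs, hsup⟩ := hL.atomistic ⊤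
    exact top_le_iff.mp (hsup ▸ Finset.sup_le fun a ha => hatoms a (hs a ha))
  have hinf : m ⊓ z = x := by
    rcases hxz.eq_or_eq (le_inf hxm hxz.le) inf_le_right with h | h
    · exact h
    · exact absurd (h ▸ inf_le_left) hzm
  have hsemi := hL.semimodular m z
  rw [hinf, htop, hL.rank_covBy x z hxz] at hsemi
  have hmtop : m < ⊤ := htop ▸ hmz
  refine ⟨m, (covBy_of_lt_of_rank_eq_succ hL.rank_strictMono hmtop ?_).isCoatom, hxm, hzm⟩
  have := hL.rank_strictMono hmtop
  omega

theorem nonempty_coatomsAbove_inter_diff_iff (hL : IsGeometricLattice L rk) (G : L) {y z : L}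
    (hyz : y ⋖ z) :
    (coatomsAbove G ∩ (coatomsAbove y \ coatomsAbove z)).Nonempty ↔ G ⊔ y < G ⊔ z := by
  have hle : G ⊔ y ≤ G ⊔ z := sup_le_sup_left hyz.le G
  constructor
  · rintro ⟨H, ⟨-, hGH⟩, ⟨hH, hyH⟩, hzH⟩
    refine hle.lt_of_not_ge fun hzy => hzH ⟨hH, ?_⟩
    exact le_sup_right.trans (hzy.trans (sup_le hGH hyH))
  · intro hlt
    have hcov : G ⊔ y ⋖ G ⊔ z := covBy_of_lt_of_rank_eq_succ hL.rank_strictMono hlt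
      (le_antisymm (hL.rank_sup_le_of_covBy hyz G) (hL.rank_strictMono hlt))
    obtain ⟨H, hH, hGyH, hGzH⟩ := hL.exists_coatom_le_not_le hcov
    refine ⟨H, ⟨hH, le_sup_left.trans hGyH⟩, ⟨hH, le_sup_right.trans hGyH⟩, fun hzH => ?_⟩
    exact hGzH (sup_le (le_sup_left.trans hGyH) hzH.2)

end IsGeometricLattice

namespace IsCompleteFlag

variable {L : Type*} [Lattice L] [BoundedOrder L] {r : ℕ} {F : Fin (r + 1) → L}

theorem strictMono (hF : IsCompleteFlag F) : StrictMono F :=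
  Fin.strictMono_iff_lt_succ.mpr fun i => (hF.2.2 i).lt

theorem pairwise_disjoint_coatomPart (hF : IsCompleteFlag F) :
    Pairwise (Disjoint on coatomPart F) := by
  suffices h : ∀ i j : Fin r, i < j →
      ∀ H ∈ coatomsAbove (F j.castSucc), H ∉ coatomPart F i by
    intro i j hij
    rcases hij.lt_or_gt with hij | hij
    · exact Set.disjoint_right.mpr fun H hH => h i j hij H hH.1
    · exact Set.disjoint_left.mpr fun H hH => h j i hij H hH.1
  rintro i j hij H ⟨hH, hjH⟩ ⟨-, hiH⟩
  exact hiH ⟨hH, (hF.strictMono.monotone (Fin.succ_le_castSucc_iff.mpr hij)).trans hjH⟩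

theorem card_nonempty_coatomsAbove_inter_coatomPart [Finite L] {rk : L → ℕ}
    (hL : IsGeometricLattice L rk) (hF : IsCompleteFlag F) (G : L) :
    Nat.card {i : Fin r // (coatomsAbove G ∩ coatomPart F i).Nonempty} = rk ⊤ - rk G := by
  classical
  set g : Fin (r + 1) → ℕ := fun i => rk (G ⊔ F i)
  have hcount := Fin.card_filter_castSucc_lt_succ_add g
    (fun i => hL.rank_strictMono.monotone (sup_le_sup_left (hF.2.2 i).le G))
    (fun i => hL.rank_sup_le_of_covBy (hF.2.2 i) G)
  have hsteps (i : Fin r) :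
      (coatomsAbove G ∩ coatomPart F i).Nonempty ↔ g i.castSucc < g i.succ := by
    refine (hL.nonempty_coatomsAbove_inter_diff_iff G (hF.2.2 i)).trans
      ⟨fun h => hL.rank_strictMono h, fun h => ?_⟩
    exact (sup_le_sup_left (hF.2.2 i).le G).lt_of_ne fun heq => h.ne (congrArg rk heq)
  rw [Nat.card_eq_fintype_card, Fintype.card_subtype]
  simp only [hsteps]
  simp only [g, hF.1, hF.2.1, sup_bot_eq, sup_top_eq] at hcount ⊢
  omega

end IsCompleteFlag

section StraightLine

variable {E : Type*} [AddCommGroup E] [TopologicalSpace E] [IsTopologicalAddGroup E]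
  [Module ℝ E] [ContinuousSMul ℝ E]

theorem ContinuousMap.Homotopic.of_segment_subset {X : Type*} [TopologicalSpace X] {S : Set E}
    {f g : C(X, S)} (h : ∀ x, segment ℝ (f x : E) (g x) ⊆ S) : f.Homotopic g := by
  let H := ContinuousMap.Homotopy.affine (ContinuousMap.comp ⟨_, continuous_subtype_val⟩ f)
    (ContinuousMap.comp ⟨_, continuous_subtype_val⟩ g)
  have hH (p : unitInterval × X) : H p ∈ S :=
    h p.2 (Path.range_segment (f p.2 : E) (g p.2) ▸ Set.mem_range_self p.1)
  exact ⟨{ toFun := fun p => ⟨H p, hH p⟩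
           continuous_toFun := H.continuous.subtype_mk hH
           map_zero_left := fun x => Subtype.ext (H.apply_zero x)
           map_one_left := fun x => Subtype.ext (H.apply_one x) }⟩

def ContinuousMap.HomotopyEquiv.ofSegmentRetraction {S : Set E} {Y : Type*} [TopologicalSpace Y]
    (p : C(S, Y)) (s : C(Y, S)) (hps : ∀ y, p (s y) = y)
    (hseg : ∀ x, segment ℝ (s (p x) : E) x ⊆ S) : S ≃ₕ Y where
  toFun := p
  invFun := s
  left_inv := ContinuousMap.Homotopic.of_segment_subset hseg
  right_inv := by
    rw [show p.comp s = ContinuousMap.id Y from ContinuousMap.ext hps]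

end StraightLine

noncomputable def homeomorphSphereOfHomogeneous {E : Type*} [NormedAddCommGroup E]
    [NormedSpace ℝ E] (N : E → ℝ) (hN : Continuous N) (hpos : ∀ x ≠ 0, 0 < N x)
    (hsmul : ∀ c : ℝ, 0 ≤ c → ∀ x, N (c • x) = c * N x) :
    {x | N x = 1} ≃ₜ Metric.sphere (0 : E) 1 := by
  have hN0 : N 0 = 0 := by simpa using hsmul 0 le_rfl 0
  have hne : ∀ x : {x | N x = 1}, (x : E) ≠ 0 := fun x h0 => by
    have hx : N x = 1 := x.2
    rw [h0, hN0] at hx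
    exact zero_ne_one hx
  have hNpos : ∀ y : Metric.sphere (0 : E) 1, 0 < N y := fun y =>
    hpos _ (ne_zero_of_mem_unit_sphere y)
  exact
  { toFun := fun x => ⟨‖(x : E)‖⁻¹ • (x : E), by simp [norm_smul, hne x]⟩
    invFun := fun y => ⟨(N y)⁻¹ • (y : E), by
      simp [hsmul _ (inv_nonneg.mpr (hNpos y).le), (hNpos y).ne']⟩
    left_inv := fun x => Subtype.ext <| by
      have hx : N x = 1 := x.2
      simp [hsmul _ (inv_nonneg.mpr (norm_nonneg _)), hx, smul_smul, hne x]
    right_inv := fun y => Subtype.ext <| by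
      simp [norm_smul, abs_of_pos (hNpos y), smul_smul, (hNpos y).ne']
    continuous_toFun := by
      refine Continuous.subtype_mk ?_ _
      exact ((continuous_norm.comp continuous_subtype_val).inv₀
        fun x => norm_ne_zero_iff.mpr (hne x)).smul continuous_subtype_val
    continuous_invFun := by
      refine Continuous.subtype_mk ?_ _
      exact ((hN.comp continuous_subtype_val).inv₀ fun y => (hNpos y).ne').smul
        continuous_subtype_val }

theorem segment_subset_realization {W : Type*} [Fintype W] {K : Set (Set W)} {σ : Set W}
    (hσ : σ ∈ K) {x y : W → ℝ} (hx : x ∈ stdSimplex ℝ W) (hy : y ∈ stdSimplex ℝ W)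
    (hxσ : support x ⊆ σ) (hyσ : support y ⊆ σ) : segment ℝ x y ⊆ realization K := by
  have hconv : Convex ℝ {z : W → ℝ | support z ⊆ σ} := by
    intro z hz z' hz' a b _ _ _ w hw
    by_contra hwσ
    apply hw
    simp [notMem_support.mp fun h => hwσ (hz h), notMem_support.mp fun h => hwσ (hz' h)]
  rintro z hz
  obtain ⟨hz, hzσ⟩ :=
    ((convex_stdSimplex ℝ W).inter hconv).segment_subset ⟨hx, hxσ⟩ ⟨hy, hyσ⟩ hz
  exact ⟨hz.1, hz.2, σ, hσ, hzσ⟩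

section SignComplex

variable {ι V : Type*} (C : ι → Set V)

def signFace (ε : ι → Bool) : Set (V × Bool) :=
  {p | ∃ i, p.1 ∈ C i ∧ p.2 = ε i}

/-- `flagComplex A G` is, by definition, `signComplex fun i => coatomsAbove G ∩ A i`. -/
def signComplex : Set (Set (V × Bool)) :=
  {σ | ∃ ε : ι → Bool, σ ⊆ signFace C ε}

theorem signComplex_subtype_nonempty :
    signComplex (fun j : {i // (C i).Nonempty} => C j) = signComplex C := by
  ext σ
  constructor
  · rintro ⟨ε, hσ⟩
    refine ⟨extend Subtype.val ε fun _ => true, fun p hp => ?_⟩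
    obtain ⟨j, hpj, hεj⟩ := hσ hp
    exact ⟨j, hpj, hεj.trans (Subtype.val_injective.extend_apply _ _ j).symm⟩
  · rintro ⟨ε, hσ⟩
    refine ⟨fun j => ε j, fun p hp => ?_⟩
    obtain ⟨i, hpi, hεi⟩ := hσ hp
    exact ⟨⟨i, p.1, hpi⟩, hpi, hεi⟩

variable {C} {ε : ι → Bool} {x : V × Bool → ℝ}

theorem injective_of_mem_of_pairwise_disjoint (hC : Pairwise (Disjoint on C)) {c : ι → V}
    (hcC : ∀ i, c i ∈ C i) : Injective c := fun i j hij => by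
  by_contra hne
  exact Set.disjoint_left.mp (hC hne) (hcC i) (hij ▸ hcC j)

/-- Weight `(t i)⁺` at `(c i, true)`, `(t i)⁻` at `(c i, false)`, and `0` off the image
of `c`. -/
noncomputable def vertexLift (c : ι → V) (t : ι → ℝ) : V × Bool → ℝ :=
  extend (Prod.map c id) (fun a => if a.2 then (t a.1)⁺ else (t a.1)⁻) 0

theorem apply_not_eq_zero_of_support_subset (hC : Pairwise (Disjoint on C))
    (hx : support x ⊆ signFace C ε) {i : ι} {v : V} (hv : v ∈ C i) : x (v, !ε i) = 0 := by
  by_contra hne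
  obtain ⟨j, hvj, hεj⟩ := hx hne
  have hji : j = i := by
    by_contra hji
    exact Set.disjoint_left.mp (hC hji) hvj hv
  simp [hji] at hεj

theorem sum_indicator_apply_of_mem (hC : Pairwise (Disjoint on C)) [Fintype ι] {i : ι} {v : V}
    (hv : v ∈ C i) (f : V → ℝ) : ∑ j, (C j).indicator f v = f v := by
  rw [Finset.sum_eq_single i (fun j _ hji => Set.indicator_of_notMem
    (Set.disjoint_right.mp (hC hji) hv) f) (by simp), Set.indicator_of_mem hv]

variable {c : ι → V} {t : ι → ℝ}

theorem vertexLift_apply (hc : Injective c) (i : ι) (b : Bool) :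
    vertexLift c t (c i, b) = if b then (t i)⁺ else (t i)⁻ :=
  (hc.prodMap injective_id).extend_apply _ _ (i, b)

theorem vertexLift_apply_of_forall_ne {p : V × Bool} (hp : ∀ i, p.1 ≠ c i) :
    vertexLift c t p = 0 :=
  extend_apply' _ _ _ fun ⟨a, hap⟩ => hp a.1 (congrArg Prod.fst hap).symm

theorem vertexLift_nonneg (hc : Injective c) (p : V × Bool) : 0 ≤ vertexLift c t p := by
  obtain ⟨v, b⟩ := p
  by_cases hv : ∃ i, v = c i
  · obtain ⟨i, rfl⟩ := hv
    rw [vertexLift_apply hc]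
    split <;> simp
  · exact (vertexLift_apply_of_forall_ne (not_exists.mp hv)).ge

theorem continuous_vertexLift (hc : Injective c) : Continuous (vertexLift c) := by
  refine continuous_pi fun ⟨v, b⟩ => ?_
  by_cases hv : ∃ i, v = c i
  · obtain ⟨i, rfl⟩ := hv
    simp only [vertexLift_apply hc]
    cases b
    · exact continuous_negPart.comp (continuous_apply i)
    · exact continuous_posPart.comp (continuous_apply i)
  · simp only [vertexLift_apply_of_forall_ne (p := (v, b)) (not_exists.mp hv)]
    exact continuous_const

theorem support_vertexLift_subset (hC : Pairwise (Disjoint on C)) (hcC : ∀ i, c i ∈ C i) :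
    support (vertexLift c t) ⊆ signFace C fun i => decide (0 ≤ t i) := by
  rintro ⟨v, b⟩ hp
  obtain ⟨i, rfl⟩ : ∃ i, v = c i := by
    by_contra hv
    exact hp (vertexLift_apply_of_forall_ne (not_exists.mp hv))
  refine ⟨i, hcC i, ?_⟩
  rw [mem_support, vertexLift_apply (injective_of_mem_of_pairwise_disjoint hC hcC)] at hp
  cases b
  · simpa using negPart_pos_iff.mp ((negPart_nonneg _).lt_of_ne (Ne.symm hp))
  · simpa using (posPart_pos_iff.mp ((posPart_nonneg _).lt_of_ne (Ne.symm hp))).le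

variable [Fintype V]

variable (C) in
noncomputable def signedMass (x : V × Bool → ℝ) (i : ι) : ℝ :=
  ∑ v, (C i).indicator (fun v => x (v, true) - x (v, false)) v

variable (C) in
noncomputable def blockMass (x : V × Bool → ℝ) (i : ι) : ℝ :=
  ∑ v, (C i).indicator (fun v => x (v, true) + x (v, false)) v

theorem continuous_signedMass : Continuous (signedMass C) := by
  refine continuous_pi fun i => continuous_finsetSum _ fun v _ => ?_
  by_cases hv : v ∈ C i
  · simp only [Set.indicator_of_mem hv]
    fun_prop
  · simp only [Set.indicator_of_notMem hv]
    exact continuous_const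

theorem blockMass_nonneg (hx : ∀ p, 0 ≤ x p) (i : ι) : 0 ≤ blockMass C x i :=
  sum_nonneg fun v _ => Set.indicator_nonneg (fun _ _ => add_nonneg (hx _) (hx _)) v

theorem apply_le_blockMass (hx : ∀ p, 0 ≤ x p) {i : ι} {v : V} (hv : v ∈ C i) (b : Bool) :
    x (v, b) ≤ blockMass C x i := by
  have hle : (C i).indicator (fun v => x (v, true) + x (v, false)) v ≤ blockMass C x i :=
    single_le_sum (f := fun v => (C i).indicator (fun v => x (v, true) + x (v, false)) v)
      (fun v _ => Set.indicator_nonneg (fun _ _ => add_nonneg (hx _) (hx _)) v) (mem_univ v)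
  rw [Set.indicator_of_mem hv] at hle
  cases b <;> linarith [hx (v, true), hx (v, false)]

theorem signedMass_eq_of_support_subset (hC : Pairwise (Disjoint on C))
    (hx : support x ⊆ signFace C ε) (i : ι) :
    signedMass C x i = if ε i then blockMass C x i else -blockMass C x i := by
  have hzero {v : V} (hv : v ∈ C i) := apply_not_eq_zero_of_support_subset hC hx hv
  unfold signedMass blockMass
  cases hεi : ε i with
  | true =>
    refine sum_congr rfl fun v _ => ?_
    by_cases hv : v ∈ C i
    · simp [hv, by simpa [hεi] using hzero hv]
    · simp [hv]
  | false =>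
    rw [if_neg Bool.false_ne_true, ← sum_neg_distrib]
    refine sum_congr rfl fun v _ => ?_
    by_cases hv : v ∈ C i
    · simp [hv, by simpa [hεi] using hzero hv]
    · simp [hv]

theorem abs_signedMass (hC : Pairwise (Disjoint on C)) (hx0 : ∀ p, 0 ≤ x p)
    (hx : support x ⊆ signFace C ε) (i : ι) : |signedMass C x i| = blockMass C x i := by
  rw [signedMass_eq_of_support_subset hC hx i]
  split <;> simp [abs_of_nonneg (blockMass_nonneg hx0 i)]

theorem sum_blockMass [Fintype ι] (hC : Pairwise (Disjoint on C))
    (hx : support x ⊆ signFace C ε) : ∑ i, blockMass C x i = ∑ p, x p := by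
  unfold blockMass
  rw [sum_comm, Fintype.sum_prod_type]
  refine sum_congr rfl fun v _ => ?_
  rw [Fintype.sum_bool]
  by_cases hv : ∃ i, v ∈ C i
  · obtain ⟨i, hv⟩ := hv
    exact sum_indicator_apply_of_mem hC hv _
  · simp only [not_exists] at hv
    have hx0 (b : Bool) : x (v, b) = 0 :=
      notMem_support.mp fun h => by obtain ⟨i, hvi, -⟩ := hx h; exact hv i hvi
    simp [hx0, hv]

theorem support_subset_signFace_signedMass (hC : Pairwise (Disjoint on C)) (hx0 : ∀ p, 0 ≤ x p)
    (hx : support x ⊆ signFace C ε) :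
    support x ⊆ signFace C fun i => decide (0 ≤ signedMass C x i) := by
  intro p hp
  obtain ⟨i, hpi, hεi⟩ := hx hp
  have hpos : 0 < blockMass C x i :=
    ((hx0 p).lt_of_ne (Ne.symm hp)).trans_le (apply_le_blockMass hx0 hpi p.2)
  refine ⟨i, hpi, hεi.trans ?_⟩
  dsimp only
  rw [signedMass_eq_of_support_subset hC hx i]
  cases ε i <;> simp [hpos.le, hpos]

theorem blockMass_vertexLift (hC : Pairwise (Disjoint on C)) (hcC : ∀ i, c i ∈ C i) (i : ι) :
    blockMass C (vertexLift c t) i = |t i| := by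
  have hc := injective_of_mem_of_pairwise_disjoint hC hcC
  unfold blockMass
  rw [sum_eq_single (c i), Set.indicator_of_mem (hcC i), vertexLift_apply hc,
    vertexLift_apply hc, if_pos rfl, if_neg Bool.false_ne_true, posPart_add_negPart]
  · intro v _ hvi
    by_cases hv : v ∈ C i
    · have hne (j : ι) : v ≠ c j := by
        rintro rfl
        obtain rfl : j = i := by
          by_contra hji
          exact Set.disjoint_left.mp (hC hji) (hcC j) hv
        exact hvi rfl
      simp [vertexLift_apply_of_forall_ne (p := (v, _)) hne]
    · exact Set.indicator_of_notMem hv _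
  · simp

theorem signedMass_vertexLift (hC : Pairwise (Disjoint on C)) (hcC : ∀ i, c i ∈ C i) :
    signedMass C (vertexLift c t) = t := by
  funext i
  rw [signedMass_eq_of_support_subset hC (support_vertexLift_subset hC hcC),
    blockMass_vertexLift hC hcC]
  by_cases ht : 0 ≤ t i
  · simp [ht, abs_of_nonneg ht]
  · simp [ht, abs_of_neg (not_le.mp ht)]

theorem mem_realization_signComplex :
    x ∈ realization (signComplex C) ↔
      (∀ p, 0 ≤ x p) ∧ ∑ p, x p = 1 ∧ ∃ ε, support x ⊆ signFace C ε :=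
  ⟨fun ⟨h0, h1, _, ⟨ε, hσ⟩, hx⟩ => ⟨h0, h1, ε, hx.trans hσ⟩,
    fun ⟨h0, h1, ε, hx⟩ => ⟨h0, h1, _, ⟨ε, subset_rfl⟩, hx⟩⟩

variable [Fintype ι]

theorem sum_abs_signedMass (hC : Pairwise (Disjoint on C))
    (hx : x ∈ realization (signComplex C)) : ∑ i, |signedMass C x i| = 1 := by
  obtain ⟨h0, h1, ε, hε⟩ := mem_realization_signComplex.mp hx
  simp only [abs_signedMass hC h0 hε, sum_blockMass hC hε, h1]

theorem vertexLift_mem_realization (hC : Pairwise (Disjoint on C)) (hcC : ∀ i, c i ∈ C i)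
    (ht : ∑ i, |t i| = 1) : vertexLift c t ∈ realization (signComplex C) := by
  have hsupp := support_vertexLift_subset (t := t) hC hcC
  refine mem_realization_signComplex.mpr ⟨vertexLift_nonneg
    (injective_of_mem_of_pairwise_disjoint hC hcC), ?_, _, hsupp⟩
  rw [← sum_blockMass hC hsupp]
  simpa only [blockMass_vertexLift hC hcC] using ht

theorem segment_vertexLift_signedMass_subset (hC : Pairwise (Disjoint on C))
    (hcC : ∀ i, c i ∈ C i) (hx : x ∈ realization (signComplex C)) :
    segment ℝ (vertexLift c (signedMass C x)) x ⊆ realization (signComplex C) := by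
  obtain ⟨h0, h1, ε, hε⟩ := mem_realization_signComplex.mp hx
  obtain ⟨hl0, hl1, -⟩ := mem_realization_signComplex.mp
    (vertexLift_mem_realization hC hcC (sum_abs_signedMass hC hx))
  exact segment_subset_realization (K := signComplex C)
    (σ := signFace C fun i => decide (0 ≤ signedMass C x i))
    ⟨_, subset_rfl⟩ ⟨hl0, hl1⟩ ⟨h0, h1⟩
    (support_vertexLift_subset hC hcC) (support_subset_signFace_signedMass hC h0 hε)

end SignComplex

noncomputable def l1SphereHomeomorphSphere (ι : Type*) [Fintype ι] :
    {t : EuclideanSpace ℝ ι | ∑ i, |t i| = 1} ≃ₜ Metric.sphere (0 : EuclideanSpace ℝ ι) 1 :=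
  homeomorphSphereOfHomogeneous (fun t : EuclideanSpace ℝ ι => ∑ i, |t i|) (by fun_prop)
    (fun t ht => by
      obtain ⟨i, hi⟩ : ∃ i, t i ≠ 0 := by
        by_contra h
        exact ht (by ext i; simpa using not_exists.mp h i)
      exact sum_pos' (fun i _ => abs_nonneg _) ⟨i, mem_univ i, abs_pos.mpr hi⟩)
    (fun c hc t => by simp [abs_mul, abs_of_nonneg hc, mul_sum])

theorem signComplex_homotopyEquiv_sphere {ι V : Type*} [Fintype ι] [Fintype V] {C : ι → Set V}
    (hC : Pairwise (Disjoint on C)) (hne : ∀ i, (C i).Nonempty) :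
    Nonempty (realization (signComplex C) ≃ₕ Metric.sphere (0 : EuclideanSpace ℝ ι) 1) := by
  choose c hcC using hne
  let T : Set (EuclideanSpace ℝ ι) := {t | ∑ i, |t i| = 1}
  have hT (t : T) : ∑ i, |(t : EuclideanSpace ℝ ι) i| = 1 := t.2
  let p : C(realization (signComplex C), T) :=
    ⟨fun x => ⟨WithLp.toLp 2 (signedMass C x), sum_abs_signedMass hC x.2⟩,
      ((PiLp.continuous_toLp 2 _).comp
        (continuous_signedMass.comp continuous_subtype_val)).subtype_mk _⟩
  let s : C(T, realization (signComplex C)) :=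
    ⟨fun t => ⟨vertexLift c (WithLp.ofLp (t : EuclideanSpace ℝ ι)),
      vertexLift_mem_realization hC hcC (hT t)⟩,
      ((continuous_vertexLift (injective_of_mem_of_pairwise_disjoint hC hcC)).comp
        ((PiLp.continuous_ofLp 2 _).comp continuous_subtype_val)).subtype_mk _⟩
  have hps (t : T) : p (s t) = t := Subtype.ext <| by simp [p, s, signedMass_vertexLift hC hcC]
  exact ⟨(ContinuousMap.HomotopyEquiv.ofSegmentRetraction p s hps fun x =>
    segment_vertexLift_signedMass_subset hC hcC x.2).trans
      (l1SphereHomeomorphSphere ι).toHomotopyEquiv⟩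

theorem signComplex_homotopyEquiv_stdSphere {ι V : Type*} [Finite ι] [Fintype V]
    {C : ι → Set V} (hC : Pairwise (Disjoint on C)) :
    Nonempty (realization (signComplex C) ≃ₕ stdSphere (Nat.card {i // (C i).Nonempty})) := by
  classical
  have := Fintype.ofFinite ι
  rw [← signComplex_subtype_nonempty]
  obtain ⟨e⟩ := signComplex_homotopyEquiv_sphere (C := fun j : {i // (C i).Nonempty} => C j)
    (fun j k hjk => hC (Subtype.val_injective.ne hjk)) fun j => j.2
  let f := LinearIsometryEquiv.piLpCongrLeft 2 ℝ ℝ (Finite.equivFin {i // (C i).Nonempty})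
  exact ⟨e.trans (f.toHomeomorph.subtype fun y => by simp [stdSphere]).toHomotopyEquiv⟩

/-- The geometric realization of `S_G` is homotopy equivalent to the sphere
`S^{corank(G) - 1}`; in particular, `S_⊥ ≃ S^{r-1}`. -/
theorem flagComplex_homotopyEquiv_sphere {L : Type*} [Lattice L] [BoundedOrder L] [Fintype L]
    {rk : L → ℕ} (hL : IsGeometricLattice L rk) {r : ℕ} (hr : rk ⊤ = r)
    (F : Fin (r + 1) → L) (hF : IsCompleteFlag F)
    (A : Fin r → Set L)
    (hA : ∀ i : Fin r, A i = coatomsAbove (F i.castSucc) \ coatomsAbove (F i.succ))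
    (G : L) :
    Nonempty (ContinuousMap.HomotopyEquiv
      (realization (flagComplex A G)) (stdSphere (r - rk G))) := by
  obtain rfl : A = coatomPart F := funext hA
  have hC : Pairwise (Disjoint on fun i => coatomsAbove G ∩ coatomPart F i) := fun i j hij =>
    (hF.pairwise_disjoint_coatomPart hij).mono Set.inter_subset_right Set.inter_subset_right
  have hcard := hF.card_nonempty_coatomsAbove_inter_coatomPart hL G
  rw [hr] at hcard
  rw [← hcard]
  exact signComplex_homotopyEquiv_stdSphere hC
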